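/- arXiv:2106.07532 — 6 statements merged into one kernel-verified Lean document; each statement's English description precedes it below -/
import Mathlib

section
/- For every θ with 0 < θ < π and every x > 1, the function F_θ(x) = arctan(sin θ / (cos θ + 1/x)) − x · arctan(sin θ / (cos θ + x)) is strictly positive, where arctan here denotes the branch taking values in [0, π] (i.e., the angle argument). -/
open Real Complex

/-!
Put `A = arg (e^{iθ} + 1/x)` and `B = arg (e^{iθ} + x)`. The product `(e^{iθ} + 1/x) (e^{iθ} + x)`
is the positive multiple `(2 cos θ + x + 1/x) e^{iθ}` of `e^{iθ}`, and both factors lie in the upper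
half-plane, so `A + B = θ` and `A - x B = θ - (1 + x) B`. Finally
`t ↦ (1 + t) arg (e^{iθ} + t) = (1 + t) arctan (sin θ / (cos θ + t))` is strictly decreasing on
`[1, ∞)`, its derivative being negative because `arctan u < u`, and it equals `θ` at `t = 1`.
-/

lemma Real.arctan_lt_self {u : ℝ} (hu : 0 < u) : arctan u < u := by
  simpa [tan_arctan] using lt_tan (arctan_pos.2 hu) (arctan_lt_pi_div_two u)

lemma Real.neg_one_lt_cos {θ : ℝ} (hθ₀ : 0 < θ) (hθπ : θ < π) : -1 < cos θ := by
  simpa using cos_lt_cos_of_nonneg_of_le_pi hθ₀.le le_rfl hθπ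

lemma hasDerivAt_arctan_div_add (s c t : ℝ) (h : c + t ≠ 0) :
    HasDerivAt (fun t => Real.arctan (s / (c + t))) (-s / ((c + t) ^ 2 + s ^ 2)) t := by
  convert ((hasDerivAt_const t s).fun_div ((hasDerivAt_id' t).const_add c) h).arctan using 1
  field_simp
  ring

lemma strictAntiOn_one_add_mul_arctan {θ : ℝ} (hθ₀ : 0 < θ) (hθπ : θ < π) :
    StrictAntiOn (fun t => (1 + t) * Real.arctan (Real.sin θ / (Real.cos θ + t))) (Set.Ici 1) := by
  set s := Real.sin θ
  set c := Real.cos θ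
  have hs : 0 < s := sin_pos_of_pos_of_lt_pi hθ₀ hθπ
  have hc : -1 < c := neg_one_lt_cos hθ₀ hθπ
  have hsc : s ^ 2 + c ^ 2 = 1 := Real.sin_sq_add_cos_sq θ
  have hderiv : ∀ t ∈ Set.Ici (1 : ℝ), HasDerivAt (fun t => (1 + t) * Real.arctan (s / (c + t)))
      (Real.arctan (s / (c + t)) + (1 + t) * (-s / ((c + t) ^ 2 + s ^ 2))) t := fun t ht => by
    simpa using ((hasDerivAt_id' t).const_add 1).fun_mul
      (hasDerivAt_arctan_div_add s c t (by linarith [Set.mem_Ici.1 ht]))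
  refine strictAntiOn_of_hasDerivWithinAt_neg (convex_Ici 1)
    (fun t ht => (hderiv t ht).continuousAt.continuousWithinAt)
    (fun t ht => (hderiv t (interior_subset ht)).hasDerivWithinAt) fun t ht => ?_
  rw [interior_Ici] at ht
  have ht1 : 1 < t := ht
  have hct : 0 < c + t := by linarith
  -- `(c + t)² + s² ≤ (1 + t) (c + t)` is `(t - 1) (1 - c) ≥ 0`.
  have hbound : s / (c + t) ≤ (1 + t) * s / ((c + t) ^ 2 + s ^ 2) := by
    rw [div_le_div_iff₀ hct (by positivity)]
    nlinarith [mul_nonneg hs.le (mul_nonneg (sub_nonneg.2 ht1.le) (sub_nonneg.2 (cos_le_one θ)))]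
  have harctan := Real.arctan_lt_self (div_pos hs hct)
  rw [mul_div_assoc', mul_neg, neg_div]
  linarith

namespace Complex

lemma arg_eq_arctan_of_re_pos {z : ℂ} (hz : 0 < z.re) : arg z = Real.arctan (z.im / z.re) := by
  obtain ⟨h₁, h₂⟩ := abs_lt.1 (abs_arg_lt_pi_div_two_iff.2 (Or.inl hz))
  rw [← tan_arg, Real.arctan_tan h₁ h₂]

/-- Two arguments in `(0, π)` whose sum exceeds `π` would put `z * w` in the lower half-plane. -/
lemma arg_mul_of_im_pos {z w : ℂ} (hz : 0 < z.im) (hw : 0 < w.im) (hzw : 0 ≤ (z * w).im) :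
    arg (z * w) = arg z + arg w := by
  have hz₀ : z ≠ 0 := fun h => hz.ne' (by simp [h])
  have hw₀ : w ≠ 0 := fun h => hw.ne' (by simp [h])
  have hz_pos := arg_nonneg_iff.2 hz.le
  have hw_pos := arg_nonneg_iff.2 hw.le
  have hz_lt := arg_lt_pi_iff.2 (Or.inr hz.ne')
  have hw_lt := arg_lt_pi_iff.2 (Or.inr hw.ne')
  refine arg_mul hz₀ hw₀ ⟨by linarith [pi_pos], not_lt.1 fun hgt => ?_⟩
  have hwrap : arg (z * w) = arg z + arg w - 2 * π := by
    rw [← arg_coe_angle_toReal_eq_arg, arg_mul_coe_angle hz₀ hw₀,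
      ← sub_zero ((arg z : Real.Angle) + arg w), ← Real.Angle.coe_two_pi, ← Real.Angle.coe_add,
      ← Real.Angle.coe_sub, Real.Angle.toReal_coe_eq_self_iff]
    constructor <;> linarith
  linarith [arg_nonneg_iff.2 hzw]

-- `(e^{iθ} + 1/t) (e^{iθ} + t) = e^{iθ} (e^{iθ} + e^{-iθ} + t + 1/t)`
lemma cos_add_inv_mul_cos_add (θ : ℝ) {t : ℝ} (ht : t ≠ 0) :
    ((Real.cos θ + 1 / t : ℝ) + Real.sin θ * I) * ((Real.cos θ + t : ℝ) + Real.sin θ * I) =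
      (2 * Real.cos θ + t + 1 / t : ℝ) * (Real.cos θ + Real.sin θ * I) := by
  have hsc := Real.sin_sq_add_cos_sq θ
  have ht' : 1 / t * t = 1 := one_div_mul_cancel ht
  apply Complex.ext <;>
    simp only [mul_re, mul_im, add_re, add_im, ofReal_re, ofReal_im, I_re, I_im]
  · linear_combination ht' - hsc
  · ring

lemma arg_cos_add_inv_add_arg_cos_add {θ t : ℝ} (hθ₀ : 0 < θ) (hθπ : θ < π) (ht : 0 < t) :
    arg ((Real.cos θ + 1 / t : ℝ) + Real.sin θ * I) + arg ((Real.cos θ + t : ℝ) + Real.sin θ * I)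
      = θ := by
  have hs : 0 < Real.sin θ := sin_pos_of_pos_of_lt_pi hθ₀ hθπ
  have hr : 0 < 2 * Real.cos θ + t + 1 / t := by
    have : 2 ≤ t + 1 / t := by
      rw [← sub_nonneg, show t + 1 / t - 2 = (t - 1) ^ 2 / t by field_simp; ring]
      positivity
    linarith [neg_one_lt_cos hθ₀ hθπ]
  have him : ∀ a : ℝ, ((a : ℂ) + Real.sin θ * I).im = Real.sin θ := fun a => by simp [-ofReal_sin]
  have hprod_im : 0 ≤ (((Real.cos θ + 1 / t : ℝ) + Real.sin θ * I) *
      ((Real.cos θ + t : ℝ) + Real.sin θ * I)).im := by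
    rw [cos_add_inv_mul_cos_add θ ht.ne', im_ofReal_mul, him]
    positivity
  rw [← arg_mul_of_im_pos (by rwa [him]) (by rwa [him]) hprod_im,
    cos_add_inv_mul_cos_add θ ht.ne', arg_real_mul _ hr, ofReal_cos, ofReal_sin,
    arg_cos_add_sin_mul_I ⟨by linarith, hθπ.le⟩]

lemma one_add_mul_arg_lt {θ x : ℝ} (hθ₀ : 0 < θ) (hθπ : θ < π) (hx : 1 < x) :
    (1 + x) * arg ((Real.cos θ + x : ℝ) + Real.sin θ * I) < θ := by
  have harg : ∀ t : ℝ, 1 ≤ t → arg ((Real.cos θ + t : ℝ) + Real.sin θ * I) =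
      Real.arctan (Real.sin θ / (Real.cos θ + t)) := fun t ht => by
    rw [arg_eq_arctan_of_re_pos] <;> simp [-ofReal_sin, -ofReal_cos]
    linarith [neg_one_lt_cos hθ₀ hθπ]
  -- at `t = 1` the sum of arguments reads `2 arg (e^{iθ} + 1) = θ`
  have hhalf := arg_cos_add_inv_add_arg_cos_add hθ₀ hθπ one_pos
  rw [div_one] at hhalf
  have hanti := strictAntiOn_one_add_mul_arctan hθ₀ hθπ Set.self_mem_Ici hx.le hx
  dsimp only at hanti
  rw [← harg 1 le_rfl, ← harg x hx.le] at hanti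
  linarith

end Complex

theorem stmt_3 (θ x : ℝ) (hθ₀ : 0 < θ) (hθπ : θ < Real.pi) (hx : 1 < x) :
    0 < Complex.arg ((Real.cos θ + 1 / x : ℝ) + Real.sin θ * Complex.I)
        - x * Complex.arg ((Real.cos θ + x : ℝ) + Real.sin θ * Complex.I) := by
  have hsum := arg_cos_add_inv_add_arg_cos_add hθ₀ hθπ (zero_lt_one.trans hx)
  have hlt := one_add_mul_arg_lt hθ₀ hθπ hx
  linarith
end

section
/- Let d ≥ 1, n ≥ 0 an integer, and c₁,…,c_d > 0. For each j, Σ_{|α|=n} (n!/(α₁!⋯α_d!))² · c^{2α}/(α_j + 1) = ∫₀¹ ∫_{T^d} |c₁ζ₁ + ⋯ + r·c_jζ_j + ⋯ + c_dζ_d|^{2n} dm_d(ζ) · 2r dr, where c^{2α} = ∏_k c_k^{2α_k}. -/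
/-!
Write `z = ∑ₖ aₖ e(θₖ)` with `e(x) = exp (2πix)` and real `aₖ`, so that `|z|^{2n} = zⁿ z̄ⁿ`.
Expanding both factors by the multinomial theorem, integration over the torus kills every
cross term `α ≠ β` by orthogonality of the characters, leaving
`∑_{|α| = n} (n! / α!)² ∏ₖ aₖ^{2αₖ}`. Taking `a = (c₁, …, r cⱼ, …, c_d)`, the `α`-term carries the
factor `r^{2αⱼ}`, and `∫₀¹ r^{2αⱼ} · 2r dr = 1 / (αⱼ + 1)`.
-/

open MeasureTheory Finset

/-- The multi-indices `α : Fin d → ℕ` with `|α| = n`, as a finset. -/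
def multiIndices (d n : ℕ) : Finset (Fin d → ℕ) :=
  (Fintype.piFinset fun _ : Fin d => Finset.range (n + 1)).filter fun α => ∑ j, α j = n

theorem multiIndices_eq_piAntidiag (d n : ℕ) : multiIndices d n = piAntidiag univ n := by
  ext α
  simp only [multiIndices, mem_filter, Fintype.mem_piFinset, mem_range, mem_piAntidiag,
    mem_univ, implies_true, and_true, and_iff_right_iff_imp]
  intro h i
  have : α i ≤ n := h ▸ single_le_sum (fun k _ => Nat.zero_le _) (mem_univ i)
  omega

theorem integral_Ioc_exp_two_pi_I_int_mul (m : ℤ) :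
    ∫ x in Set.Ioc (0:ℝ) 1, Complex.exp (2 * Real.pi * Complex.I * m * x) =
      if m = 0 then 1 else 0 := by
  rw [← intervalIntegral.integral_of_le zero_le_one]
  split_ifs with hm
  · simp [hm]
  · have hc : 2 * Real.pi * Complex.I * m ≠ 0 := by simp [Real.pi_ne_zero, hm]
    rw [integral_exp_mul_complex hc, Complex.ofReal_one, Complex.ofReal_zero, mul_zero,
      Complex.exp_zero, mul_one, show 2 * Real.pi * Complex.I * m = m * (2 * Real.pi * Complex.I)
        by ring, Complex.exp_int_mul_two_pi_mul_I, sub_self, zero_div]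

theorem integral_Ioc_mul_exp_pow_mul_mul_exp_neg_pow (A : ℂ) (p q : ℕ) :
    ∫ x in Set.Ioc (0:ℝ) 1, (A * Complex.exp (2 * Real.pi * Complex.I * x)) ^ p *
        (A * Complex.exp (-(2 * Real.pi * Complex.I * x))) ^ q =
      if p = q then A ^ (2 * p) else 0 := by
  have h : ∀ x : ℝ, (A * Complex.exp (2 * Real.pi * Complex.I * x)) ^ p *
      (A * Complex.exp (-(2 * Real.pi * Complex.I * x))) ^ q =
        A ^ (p + q) * Complex.exp (2 * Real.pi * Complex.I * ((p - q : ℤ) : ℂ) * x) := by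
    intro x
    rw [mul_pow, mul_pow, ← Complex.exp_nat_mul, ← Complex.exp_nat_mul, mul_mul_mul_comm,
      pow_add, ← Complex.exp_add]
    push_cast
    ring_nf
  simp_rw [h]
  rw [integral_const_mul, integral_Ioc_exp_two_pi_I_int_mul]
  by_cases hpq : p = q
  · simp [hpq, two_mul]
  · simp [hpq, sub_eq_zero]

section Torus

variable {ι : Type*} [Fintype ι]

theorem ofReal_norm_sum_mul_exp_pow (a θ : ι → ℝ) (n : ℕ) :
    ((‖∑ k, (a k : ℂ) * Complex.exp (2 * Real.pi * Complex.I * θ k)‖ ^ (2 * n) : ℝ) : ℂ) =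
      (∑ k, (a k : ℂ) * Complex.exp (2 * Real.pi * Complex.I * θ k)) ^ n *
        (∑ k, (a k : ℂ) * Complex.exp (-(2 * Real.pi * Complex.I * θ k))) ^ n := by
  have hconj : ∑ k, (a k : ℂ) * Complex.exp (-(2 * Real.pi * Complex.I * θ k)) =
      starRingEnd ℂ (∑ k, (a k : ℂ) * Complex.exp (2 * Real.pi * Complex.I * θ k)) := by
    simp [map_sum, ← Complex.exp_conj, map_ofNat]
  rw [hconj, ← mul_pow, Complex.mul_conj, ← Complex.sq_norm, pow_mul]
  push_cast
  rfl

/- Normalized Haar measure on the torus `𝕋^ι`, pulled back along `θ ↦ (e(θₖ))ₖ`. -/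
local notation "m[" ι "]" =>
  Measure.pi fun _ : ι => Measure.restrict (volume : Measure ℝ) (Set.Ioc 0 1)

theorem integrable_torus_prod_mul_exp_pow_mul_mul_exp_neg_pow (a : ι → ℂ) (α β : ι → ℕ) :
    Integrable (fun θ : ι → ℝ => ∏ k, (a k * Complex.exp (2 * Real.pi * Complex.I * θ k)) ^ α k *
      (a k * Complex.exp (-(2 * Real.pi * Complex.I * θ k))) ^ β k) m[ι] :=
  Integrable.fintype_prod (f := fun k (x : ℝ) =>
    (a k * Complex.exp (2 * Real.pi * Complex.I * x)) ^ α k *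
      (a k * Complex.exp (-(2 * Real.pi * Complex.I * x))) ^ β k)
    fun _ => (by fun_prop : Continuous _).integrableOn_Ioc

theorem integral_torus_prod_mul_exp_pow_mul_mul_exp_neg_pow (a : ι → ℂ) (α β : ι → ℕ) :
    ∫ θ, ∏ k, (a k * Complex.exp (2 * Real.pi * Complex.I * θ k)) ^ α k *
      (a k * Complex.exp (-(2 * Real.pi * Complex.I * θ k))) ^ β k ∂m[ι] =
        if α = β then ∏ k, a k ^ (2 * α k) else 0 := by
  rw [integral_fintype_prod_eq_prod (fun k (x : ℝ) =>
    (a k * Complex.exp (2 * Real.pi * Complex.I * x)) ^ α k *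
      (a k * Complex.exp (-(2 * Real.pi * Complex.I * x))) ^ β k)]
  simp_rw [integral_Ioc_mul_exp_pow_mul_mul_exp_neg_pow]
  split_ifs with h
  · simp [h]
  · obtain ⟨k, hk⟩ := Function.ne_iff.mp h
    exact prod_eq_zero (mem_univ k) (if_neg hk)

theorem integral_torus_norm_sum_mul_exp_pow [DecidableEq ι] (a : ι → ℝ) (n : ℕ) :
    ∫ θ in Set.univ.pi fun _ : ι => Set.Ioc (0:ℝ) 1,
        ‖∑ k, (a k : ℂ) * Complex.exp (2 * Real.pi * Complex.I * θ k)‖ ^ (2 * n) =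
      ∑ α ∈ piAntidiag univ n, (Nat.multinomial univ α : ℝ) ^ 2 * ∏ k, a k ^ (2 * α k) := by
  rw [volume_pi, Measure.restrict_pi_pi]
  apply Complex.ofReal_injective
  have hexpand : ∀ θ : ι → ℝ,
      ((‖∑ k, (a k : ℂ) * Complex.exp (2 * Real.pi * Complex.I * θ k)‖ ^ (2 * n) : ℝ) : ℂ) =
        ∑ α ∈ piAntidiag univ n, ∑ β ∈ piAntidiag univ n,
          (Nat.multinomial univ α * Nat.multinomial univ β : ℂ) *
            ∏ k, ((a k : ℂ) * Complex.exp (2 * Real.pi * Complex.I * θ k)) ^ α k *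
              ((a k : ℂ) * Complex.exp (-(2 * Real.pi * Complex.I * θ k))) ^ β k := by
    intro θ
    rw [ofReal_norm_sum_mul_exp_pow, sum_pow_eq_sum_piAntidiag, sum_pow_eq_sum_piAntidiag,
      sum_mul_sum]
    refine sum_congr rfl fun α _ => sum_congr rfl fun β _ => ?_
    rw [prod_mul_distrib]
    ring
  have hintegrable := integrable_torus_prod_mul_exp_pow_mul_mul_exp_neg_pow (ι := ι) (a ·)
  rw [← integral_complex_ofReal]
  simp_rw [hexpand]
  rw [integral_finsetSum _ fun α _ =>
    integrable_finsetSum _ fun β _ => (hintegrable α β).const_mul _]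
  simp_rw [integral_finsetSum _ fun β _ => (hintegrable _ β).const_mul _, integral_const_mul,
    integral_torus_prod_mul_exp_pow_mul_mul_exp_neg_pow, mul_ite, mul_zero, sum_ite_eq]
  push_cast
  exact sum_congr rfl fun α hα => by rw [if_pos hα, sq]

end Torus

theorem prod_ite_mul_pow {ι R : Type*} [Fintype ι] [DecidableEq ι] [CommMonoid R] (j : ι) (r : R)
    (c : ι → R) (α : ι → ℕ) :
    ∏ k, ((if k = j then r else 1) * c k) ^ α k = r ^ α j * ∏ k, c k ^ α k := by
  simp_rw [mul_pow, prod_mul_distrib, ite_pow, one_pow, prod_ite_eq', if_pos (mem_univ j)]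

theorem integral_Ioc_pow_two_mul_mul_two_mul (m : ℕ) :
    ∫ r in Set.Ioc (0:ℝ) 1, r ^ (2 * m) * (2 * r) = ((m : ℝ) + 1)⁻¹ := by
  have h : ∀ r : ℝ, r ^ (2 * m) * (2 * r) = 2 * r ^ (2 * m + 1) := fun r => by ring
  simp_rw [h]
  rw [integral_const_mul, ← intervalIntegral.integral_of_le zero_le_one, integral_pow]
  field_simp
  push_cast
  ring

theorem stmt_6_general (d : ℕ) (n : ℕ) (c : Fin d → ℝ) (j : Fin d) :
    (∑ α ∈ multiIndices d n,
        (Nat.multinomial Finset.univ α : ℝ) ^ 2 * (∏ k, c k ^ (2 * α k)) / (α j + 1))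
      = ∫ r in Set.Ioc (0:ℝ) 1,
          (∫ θ in Set.univ.pi fun _ : Fin d => Set.Ioc (0:ℝ) 1,
            ‖∑ k, (if k = j then (r : ℂ) else 1) * (c k : ℂ)
                * Complex.exp (2 * Real.pi * Complex.I * θ k)‖ ^ (2 * n)) * (2 * r) := by
  have hinner : ∀ r : ℝ,
      ∫ θ in Set.univ.pi fun _ : Fin d => Set.Ioc (0:ℝ) 1,
          ‖∑ k, (if k = j then (r : ℂ) else 1) * (c k : ℂ)
            * Complex.exp (2 * Real.pi * Complex.I * θ k)‖ ^ (2 * n) =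
        ∑ α ∈ multiIndices d n,
          (Nat.multinomial univ α : ℝ) ^ 2 * (∏ k, c k ^ (2 * α k)) * r ^ (2 * α j) := by
    intro r
    have hcast : ∀ k, (if k = j then (r : ℂ) else 1) * (c k : ℂ) =
        ((if k = j then r else 1) * c k : ℝ) := fun k => by split_ifs <;> simp
    simp_rw [hcast, integral_torus_norm_sum_mul_exp_pow, prod_ite_mul_pow,
      multiIndices_eq_piAntidiag]
    exact sum_congr rfl fun α _ => by ring
  simp_rw [hinner, sum_mul]
  rw [integral_finsetSum _ fun α _ => Continuous.integrableOn_Ioc (by fun_prop)]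
  refine sum_congr rfl fun α _ => ?_
  simp_rw [mul_assoc _ (_ ^ _), integral_const_mul, integral_Ioc_pow_two_mul_mul_two_mul]
  rfl

theorem stmt_6 (d : ℕ) (hd : 1 ≤ d) (n : ℕ) (c : Fin d → ℝ) (hc : ∀ j, 0 < c j) (j : Fin d) :
    (∑ α ∈ multiIndices d n,
        (Nat.multinomial Finset.univ α : ℝ) ^ 2 * (∏ k, c k ^ (2 * α k)) / (α j + 1))
      = ∫ r in Set.Ioc (0:ℝ) 1,
          (∫ θ in Set.univ.pi fun _ : Fin d => Set.Ioc (0:ℝ) 1,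
            ‖∑ k, (if k = j then (r : ℂ) else 1) * (c k : ℂ)
                * Complex.exp (2 * Real.pi * Complex.I * θ k)‖ ^ (2 * n)) * (2 * r) :=
  stmt_6_general d n c j
end

section
/- Let n ≥ 0 be an integer and c₁,…,c_d > 0. For fixed j, with A = Σ_{|α|=n} binom(n,α)² c^{2α} and B_{j,k} = (c_j/c_k) Σ_{|α|=n} binom(n,α)² (α_k/(α_j+1)) c^{2α} for k ≠ j, one has A·c_j + Σ_{k≠j} B_{j,k}·c_k = c_j·(n+1)·Σ_{|α|=n} binom(n,α)² c^{2α}/(α_j+1), where binom(n,α) = n!/(α₁!⋯α_d!). -/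
/-!
Cancelling `c k` turns `B_{j,k} c_k` into `c_j ∑ w_α α_k / (α_j + 1)` with `w_α = binom(n,α)² c^{2α}`.
Summing over `k ≠ j` and using `∑_{k ≠ j} α_k = n - α_j`, each `w_α` acquires the total coefficient
`1 + (n - α_j) / (α_j + 1) = (n + 1) / (α_j + 1)`.
-/

open Finset

theorem mem_multiIndices {d n : ℕ} {α : Fin d → ℕ} :
    α ∈ multiIndices d n ↔ ∑ j, α j = n := by
  refine ⟨fun h => (mem_filter.mp h).2, fun h => mem_filter.mpr ⟨?_, h⟩⟩
  refine Fintype.mem_piFinset.mpr fun j => mem_range.mpr (Nat.lt_succ_of_le ?_)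
  exact h ▸ single_le_sum (fun _ _ => Nat.zero_le _) (mem_univ j)

theorem sum_erase_eq_sub_of_mem_multiIndices {d n : ℕ} {α : Fin d → ℕ}
    (hα : α ∈ multiIndices d n) (j : Fin d) :
    ∑ k ∈ univ.erase j, (α k : ℝ) = n - α j := by
  rw [eq_sub_iff_add_eq, sum_erase_add _ _ (mem_univ j)]
  exact_mod_cast mem_multiIndices.mp hα

theorem sum_multiIndices_add_sum_erase_mul_div_succ (d n : ℕ) (w : (Fin d → ℕ) → ℝ)
    (j : Fin d) :
    ∑ α ∈ multiIndices d n, w α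
      + ∑ k ∈ univ.erase j, ∑ α ∈ multiIndices d n, w α * ((α k : ℝ) / (α j + 1))
      = (n + 1) * ∑ α ∈ multiIndices d n, w α / (α j + 1) := by
  rw [sum_comm, ← sum_add_distrib, mul_sum]
  refine sum_congr rfl fun α hα => ?_
  rw [← mul_sum, ← sum_div, sum_erase_eq_sub_of_mem_multiIndices hα j]
  field_simp
  ring

theorem stmt_7 (d : ℕ) (n : ℕ) (c : Fin d → ℝ) (hc : ∀ j, 0 < c j) (j : Fin d) :
    (∑ α ∈ multiIndices d n,
        (Nat.multinomial Finset.univ α : ℝ) ^ 2 * ∏ k, c k ^ (2 * α k)) * c j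
      + ∑ k ∈ Finset.univ.erase j,
          (c j / c k * ∑ α ∈ multiIndices d n,
            (Nat.multinomial Finset.univ α : ℝ) ^ 2 * ((α k : ℝ) / (α j + 1))
              * ∏ l, c l ^ (2 * α l)) * c k
      = c j * (n + 1) * ∑ α ∈ multiIndices d n,
          (Nat.multinomial Finset.univ α : ℝ) ^ 2 * (∏ l, c l ^ (2 * α l)) / (α j + 1) := by
  set w : (Fin d → ℕ) → ℝ := fun α => (Nat.multinomial univ α : ℝ) ^ 2 * ∏ l, c l ^ (2 * α l)
  have hB : ∀ k ∈ univ.erase j,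
      (c j / c k * ∑ α ∈ multiIndices d n,
        (Nat.multinomial univ α : ℝ) ^ 2 * ((α k : ℝ) / (α j + 1)) * ∏ l, c l ^ (2 * α l)) * c k
      = c j * ∑ α ∈ multiIndices d n, w α * ((α k : ℝ) / (α j + 1)) := by
    intro k _
    simp only [w, mul_right_comm _ (_ / _ : ℝ)]
    field_simp [(hc k).ne']
  rw [sum_congr rfl hB, ← mul_sum, mul_comm _ (c j), ← mul_add,
    sum_multiIndices_add_sum_erase_mul_div_succ, mul_assoc]
end

section
/- For every nonnegative integer n, the quantity Φ(2(n+1)) := ∫_{T³} |ζ₁+ζ₂+ζ₃|^{2n}·(ζ₁+ζ₂+ζ₃)·ζ₁ζ₂·conj(ζ₃)³ dm₃(ζ) equals (n+1)·Σ_{|β|=n} binom(n,β)²·β₁β₂/((β₃+1)(β₃+2)(β₃+3)), where the sum is over multi-indices β ∈ ℕ₀³ with β₁+β₂+β₃ = n. -/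
/-!
Writing `S = ζ₁ + ζ₂ + ζ₃`, the integrand is `S ^ (n + 1) * conj S ^ n * ζ₁ ζ₂ conj ζ₃ ^ 3`.
Expanding both powers by the multinomial theorem turns it into a combination of monomials
`ζ ^ a * conj ζ ^ b`, whose integral over the torus is `1` if `a = b` and `0` otherwise. For each
`β` with `|β| = n` in the expansion of `conj S ^ n`, the only surviving `α` is
`(β₀ - 1, β₁ - 1, β₂ + 3)`, and the product of the two multinomial coefficients is the stated term.
-/

open MeasureTheory Finset

/-- The multi-indices `β : Fin 3 → ℕ` with `|β| = n`, as a finset. -/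
def multiIndices3 (n : ℕ) : Finset (Fin 3 → ℕ) :=
  (Fintype.piFinset fun _ : Fin 3 => Finset.range (n + 1)).filter fun β => ∑ j, β j = n

open Complex ComplexConjugate
open scoped Real

noncomputable def expTwoPiI (t : ℝ) : ℂ := exp (2 * π * I * t)

lemma expTwoPiI_pow_mul_conj_pow (a b : ℕ) (t : ℝ) :
    expTwoPiI t ^ a * conj (expTwoPiI t) ^ b = exp (((a - b : ℤ) : ℂ) * (2 * π * I) * t) := by
  rw [expTwoPiI, ← exp_conj, ← exp_nat_mul, ← exp_nat_mul, ← exp_add]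
  congr 1
  simp only [map_mul, map_ofNat, conj_ofReal, conj_I, Int.cast_sub, Int.cast_natCast]
  ring

lemma setIntegral_Ioc_zero_one_exp_int_mul_two_pi_I (k : ℤ) :
    ∫ t in Set.Ioc (0 : ℝ) 1, exp (k * (2 * π * I) * t) = if k = 0 then 1 else 0 := by
  rw [← intervalIntegral.integral_of_le zero_le_one]
  split_ifs with hk
  · simp [hk]
  · have hc : (k : ℂ) * (2 * π * I) ≠ 0 := by simp [hk, Real.pi_ne_zero, I_ne_zero]
    rw [integral_exp_mul_complex hc]
    simp [exp_int_mul_two_pi_mul_I]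

lemma setIntegral_Ioc_zero_one_expTwoPiI_pow_mul_conj_pow (a b : ℕ) :
    ∫ t in Set.Ioc (0 : ℝ) 1, expTwoPiI t ^ a * conj (expTwoPiI t) ^ b =
      if a = b then 1 else 0 := by
  simp_rw [expTwoPiI_pow_mul_conj_pow, setIntegral_Ioc_zero_one_exp_int_mul_two_pi_I, sub_eq_zero,
    Nat.cast_inj]

lemma ofReal_norm_pow_two_mul (z : ℂ) (n : ℕ) :
    ((‖z‖ ^ (2 * n) : ℝ) : ℂ) = z ^ n * conj z ^ n := by
  rw [ofReal_pow, pow_mul, ← mul_conj', mul_pow]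

section Torus

variable {ι : Type*} [Fintype ι]

theorem setIntegral_univ_pi_prod (s : ι → Set ℝ) (f : ι → ℝ → ℂ) :
    ∫ θ in Set.univ.pi s, ∏ j, f j (θ j) = ∏ j, ∫ t in s j, f j t := by
  rw [volume_pi, Measure.restrict_pi_pi]
  exact integral_fintype_prod_eq_prod f

noncomputable def torusMonomial (a b : ι → ℕ) (θ : ι → ℝ) : ℂ :=
  ∏ j, expTwoPiI (θ j) ^ a j * conj (expTwoPiI (θ j)) ^ b j

lemma torusMonomial_mul (a b c d : ι → ℕ) (θ : ι → ℝ) :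
    torusMonomial a b θ * torusMonomial c d θ = torusMonomial (a + c) (b + d) θ := by
  simp only [torusMonomial, ← prod_mul_distrib, Pi.add_apply, pow_add]
  exact prod_congr rfl fun _ _ => by ring

lemma continuous_torusMonomial (a b : ι → ℕ) : Continuous (torusMonomial a b) := by
  unfold torusMonomial expTwoPiI
  fun_prop

lemma integrableOn_torusMonomial (a b : ι → ℕ) :
    IntegrableOn (torusMonomial a b) (Set.univ.pi fun _ => Set.Ioc (0 : ℝ) 1) :=
  ((continuous_torusMonomial a b).continuousOn.integrableOn_compact
    (isCompact_univ_pi fun _ => isCompact_Icc)).mono_set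
    (Set.pi_mono fun _ _ => Set.Ioc_subset_Icc_self)

theorem setIntegral_torusMonomial [DecidableEq ι] (a b : ι → ℕ) :
    ∫ θ in Set.univ.pi (fun _ => Set.Ioc (0 : ℝ) 1), torusMonomial a b θ =
      if a = b then 1 else 0 := by
  simp_rw [torusMonomial]
  rw [setIntegral_univ_pi_prod _ fun j t => expTwoPiI t ^ a j * conj (expTwoPiI t) ^ b j]
  simp_rw [setIntegral_Ioc_zero_one_expTwoPiI_pow_mul_conj_pow, Fintype.prod_boole, funext_iff]

variable [DecidableEq ι]

lemma sum_expTwoPiI_pow (p : ℕ) (θ : ι → ℝ) :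
    (∑ j, expTwoPiI (θ j)) ^ p =
      ∑ α ∈ piAntidiag univ p, (Nat.multinomial univ α : ℂ) * torusMonomial α 0 θ := by
  simp [sum_pow_eq_sum_piAntidiag, torusMonomial]

lemma conj_sum_expTwoPiI_pow (q : ℕ) (θ : ι → ℝ) :
    conj (∑ j, expTwoPiI (θ j)) ^ q =
      ∑ β ∈ piAntidiag univ q, (Nat.multinomial univ β : ℂ) * torusMonomial 0 β θ := by
  simp [map_sum, sum_pow_eq_sum_piAntidiag, torusMonomial]

theorem setIntegral_sum_pow_mul_conj_pow_mul_torusMonomial (p q : ℕ) (c d : ι → ℕ) :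
    ∫ θ in Set.univ.pi (fun _ => Set.Ioc (0 : ℝ) 1),
        (∑ j, expTwoPiI (θ j)) ^ p * conj (∑ j, expTwoPiI (θ j)) ^ q * torusMonomial c d θ =
      ∑ α ∈ piAntidiag univ p, ∑ β ∈ piAntidiag univ q,
        if α + c = β + d then (Nat.multinomial univ α * Nat.multinomial univ β : ℂ) else 0 := by
  have expand (θ : ι → ℝ) :
      (∑ j, expTwoPiI (θ j)) ^ p * conj (∑ j, expTwoPiI (θ j)) ^ q * torusMonomial c d θ =
        ∑ α ∈ piAntidiag univ p, ∑ β ∈ piAntidiag univ q,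
          (Nat.multinomial univ α * Nat.multinomial univ β : ℂ) *
            torusMonomial (α + c) (β + d) θ := by
    rw [sum_expTwoPiI_pow, conj_sum_expTwoPiI_pow, sum_mul_sum, sum_mul]
    refine sum_congr rfl fun α _ => ?_
    rw [sum_mul]
    refine sum_congr rfl fun β _ => ?_
    rw [mul_mul_mul_comm, mul_assoc, torusMonomial_mul, torusMonomial_mul, add_zero, zero_add]
  simp_rw [expand]
  rw [integral_finsetSum _ fun α _ => integrable_finsetSum _ fun β _ =>
    (integrableOn_torusMonomial _ _).const_mul _]
  refine sum_congr rfl fun α _ => ?_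
  rw [integral_finsetSum _ fun β _ => (integrableOn_torusMonomial _ _).const_mul _]
  simp_rw [integral_const_mul, setIntegral_torusMonomial, mul_ite, mul_one, mul_zero]

end Torus

lemma multiIndices3_eq_piAntidiag (n : ℕ) : multiIndices3 n = piAntidiag univ n := by
  ext β
  simp only [multiIndices3, mem_filter, Fintype.mem_piFinset, mem_range, mem_piAntidiag,
    mem_univ, implies_true, and_true, and_iff_right_iff_imp]
  rintro rfl j
  exact Nat.lt_succ_of_le (single_le_sum (fun i _ => Nat.zero_le (β i)) (mem_univ j))

lemma multinomial_three_mul (a b c : ℕ) :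
    Nat.multinomial univ ![a, b, c + 3] * ((c + 1) * (c + 2) * (c + 3)) =
      (a + b + c + 3) * (a + 1) * (b + 1) * Nat.multinomial univ ![a + 1, b + 1, c] := by
  have specA := Nat.multinomial_spec univ ![a, b, c + 3]
  have specB := Nat.multinomial_spec univ ![a + 1, b + 1, c]
  simp only [Fin.prod_univ_three, Fin.sum_univ_three, Matrix.cons_val] at specA specB
  rw [show a + b + (c + 3) = (a + 1 + (b + 1) + c) + 1 by ring] at specA
  simp only [Nat.factorial_succ] at specA specB
  apply Nat.eq_of_mul_eq_mul_left (by positivity : 0 < a.factorial * b.factorial * c.factorial)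
  linear_combination specA - (a + b + c + 3) * specB

lemma sum_piAntidiag_ite_shift (n : ℕ) (β : Fin 3 → ℕ) (hβ : ∑ j, β j = n) :
    ∑ α ∈ piAntidiag univ (n + 1), (if α + ![1, 1, 0] = β + ![0, 0, 3] then
        (Nat.multinomial univ α * Nat.multinomial univ β : ℂ) else 0) =
      (((n + 1 : ℝ) * ((Nat.multinomial univ β : ℝ) ^ 2 * (β 0 : ℝ) * (β 1 : ℝ) /
        (((β 2 : ℝ) + 1) * ((β 2 : ℝ) + 2) * ((β 2 : ℝ) + 3))) : ℝ) : ℂ) := by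
  obtain ⟨x, y, z, rfl⟩ : ∃ x y z, β = ![x, y, z] :=
    ⟨β 0, β 1, β 2, by ext i; fin_cases i <;> rfl⟩
  simp only [Fin.sum_univ_three, Matrix.cons_val] at hβ
  subst hβ
  rcases x with _ | a
  · refine (sum_eq_zero fun α _ => if_neg fun h => ?_).trans (by simp)
    simpa using congrFun h 0
  rcases y with _ | b
  · refine (sum_eq_zero fun α _ => if_neg fun h => ?_).trans (by simp)
    simpa using congrFun h 1
  have shift_iff (α : Fin 3 → ℕ) :
      α + ![1, 1, 0] = ![a + 1, b + 1, z] + ![0, 0, 3] ↔ α = ![a, b, z + 3] := by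
    simp only [funext_iff, Fin.forall_fin_succ]
    simp
  have mem : ![a, b, z + 3] ∈ piAntidiag univ (a + 1 + (b + 1) + z + 1) := by
    simp only [mem_piAntidiag, Fin.sum_univ_three, Matrix.cons_val, mem_univ, implies_true,
      and_true]
    ring
  simp_rw [shift_iff, sum_ite_eq', if_pos mem]
  have key : (Nat.multinomial univ ![a, b, z + 3] : ℂ) * ((z + 1) * (z + 2) * (z + 3)) =
      (a + b + z + 3) * (a + 1) * (b + 1) * Nat.multinomial univ ![a + 1, b + 1, z] := by
    exact_mod_cast multinomial_three_mul a b z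
  have hD : ((z : ℂ) + 1) * (z + 2) * (z + 3) ≠ 0 := by norm_cast
  push_cast
  rw [← mul_div_assoc, eq_div_iff hD]
  linear_combination (Nat.multinomial univ ![a + 1, b + 1, z] : ℂ) * key

theorem stmt_10 (n : ℕ) :
    (∫ θ in Set.univ.pi fun _ : Fin 3 => Set.Ioc (0:ℝ) 1,
        ((‖∑ j, Complex.exp (2 * Real.pi * Complex.I * θ j)‖ ^ (2 * n) : ℝ) : ℂ)
          * (∑ j, Complex.exp (2 * Real.pi * Complex.I * θ j))
          * Complex.exp (2 * Real.pi * Complex.I * θ 0)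
          * Complex.exp (2 * Real.pi * Complex.I * θ 1)
          * (starRingEnd ℂ) (Complex.exp (2 * Real.pi * Complex.I * θ 2)) ^ 3)
      = Complex.ofReal ((n + 1 : ℝ) * ∑ β ∈ multiIndices3 n,
          (Nat.multinomial Finset.univ β : ℝ) ^ 2 * (β 0 : ℝ) * (β 1 : ℝ)
            / (((β 2 : ℝ) + 1) * ((β 2 : ℝ) + 2) * ((β 2 : ℝ) + 3))) := by
  have integrand_eq (θ : Fin 3 → ℝ) :
      ((‖∑ j, Complex.exp (2 * Real.pi * Complex.I * θ j)‖ ^ (2 * n) : ℝ) : ℂ)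
          * (∑ j, Complex.exp (2 * Real.pi * Complex.I * θ j))
          * Complex.exp (2 * Real.pi * Complex.I * θ 0)
          * Complex.exp (2 * Real.pi * Complex.I * θ 1)
          * (starRingEnd ℂ) (Complex.exp (2 * Real.pi * Complex.I * θ 2)) ^ 3 =
        (∑ j, expTwoPiI (θ j)) ^ (n + 1) * conj (∑ j, expTwoPiI (θ j)) ^ n *
          torusMonomial ![1, 1, 0] ![0, 0, 3] θ := by
    change ((‖∑ j, expTwoPiI (θ j)‖ ^ (2 * n) : ℝ) : ℂ) * (∑ j, expTwoPiI (θ j)) *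
      expTwoPiI (θ 0) * expTwoPiI (θ 1) * conj (expTwoPiI (θ 2)) ^ 3 = _
    simp only [ofReal_norm_pow_two_mul, torusMonomial, Fin.prod_univ_three, Matrix.cons_val]
    ring
  simp_rw [integrand_eq]
  rw [setIntegral_sum_pow_mul_conj_pow_mul_torusMonomial, sum_comm, multiIndices3_eq_piAntidiag,
    mul_sum, ofReal_sum]
  exact sum_congr rfl fun β hβ => sum_piAntidiag_ite_shift n β (mem_piAntidiag.1 hβ).1
end

section
/- For every integer n ≥ 2, (n+1)·Σ_{|β|=n} binom(n,β)²·β₁β₂/((β₃+1)(β₃+2)(β₃+3)) = ((n+1)·n²·(n−1)²/6) · ∫_{D³} |w₁+w₂+w₃|^{2(n−2)} · 3(1−|w₃|²)² dA₃(w), where D is the unit disc and dA₃ is the product of normalized area measures on D (each with total mass 1). -/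
open MeasureTheory Finset

/-- The normalized area measure on `ℂ`, giving the unit disc total mass `1`. -/
noncomputable def discMeasure : Measure ℂ := (ENNReal.ofReal Real.pi)⁻¹ • volume

open Metric Complex ComplexConjugate

/-!
The monomials are orthogonal on the disc: `∫_D w^i conj(w)^k dA = δ_ik / (i + 1)`, the
off-diagonal terms vanishing by rotation invariance. Expanding `(w + z)^m` binomially therefore
gives `∫_D |w + z|^(2m) dA(w) = ∑_k C(m,k)² / (k + 1) · |z|^(2(m-k))`. Applying this in `w₁` and
then in `w₂`, and using `∫_D |w|^(2s) · 3(1 - |w|²)² dA = 6 / ((s+1)(s+2)(s+3))`, the triple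
integral becomes a sum over `(k, j, s)` with `k + j + s = n - 2` in which `C(n-2,k) C(n-2-k,j)` is
the multinomial coefficient of `(k, j, s)`. In the sum on the left only the `β` with `β₁, β₂ ≥ 1`
contribute, and the shift `β = (k+1, j+1, s)` matches the two sums term by term, because
`binom(n; k+1, j+1, s) (k+1)(j+1) = n (n-1) binom(n-2; k, j, s)`.
-/

theorem setIntegral_ball_norm_pow {E : Type*} [NormedAddCommGroup E] [NormedSpace ℝ E]
    [FiniteDimensional ℝ E] [Nontrivial E] [MeasurableSpace E] [BorelSpace E]
    (μ : Measure E) [μ.IsAddHaarMeasure] (p : ℕ) :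
    ∫ x in ball (0 : E) 1, ‖x‖ ^ p ∂μ
      = Module.finrank ℝ E / (p + Module.finrank ℝ E) * μ.real (ball 0 1) := by
  set d := Module.finrank ℝ E
  have hd : 0 < d := Module.finrank_pos
  have hball : ∀ x : E, (ball (0 : E) 1).indicator (‖·‖ ^ p) x
      = (Set.Iio (1 : ℝ)).indicator (· ^ p) ‖x‖ := fun x => by
    by_cases hx : ‖x‖ < 1 <;> simp [Set.indicator, hx]
  have hradial : ∫ y in Set.Ioi (0 : ℝ), y ^ (d - 1) • (Set.Iio (1 : ℝ)).indicator (· ^ p) y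
      = 1 / (p + d) := by
    have hpow : ∀ y : ℝ, y ^ (d - 1) • (Set.Iio (1 : ℝ)).indicator (· ^ p) y
        = (Set.Iio (1 : ℝ)).indicator (· ^ (p + d - 1)) y := fun y => by
      by_cases hy : y < 1
      · simp only [Set.indicator, Set.mem_Iio, hy, if_true, smul_eq_mul, ← pow_add]
        congr 1; omega
      · simp [hy]
    rw [funext hpow, integral_indicator measurableSet_Iio,
      Measure.restrict_restrict measurableSet_Iio, Set.Iio_inter_Ioi,
      ← integral_Ioc_eq_integral_Ioo, ← intervalIntegral.integral_of_le zero_le_one, integral_pow]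
    have hexp : ((p + d - 1 : ℕ) : ℝ) + 1 = p + d := by
      rw [Nat.cast_sub (by omega)]; push_cast; ring
    simp [hexp]
  rw [← integral_indicator measurableSet_ball, funext hball,
    integral_fun_norm_addHaar μ ((Set.Iio (1 : ℝ)).indicator (· ^ p)), hradial]
  simp only [nsmul_eq_mul, smul_eq_mul]
  field_simp
  ring

theorem integrableOn_unitBall_of_continuous {E : Type*} [NormedAddCommGroup E] {f : ℂ → E}
    (hf : Continuous f) : IntegrableOn f (ball (0 : ℂ) 1) :=
  (hf.continuousOn.integrableOn_compact (isCompact_closedBall 0 1)).mono_set ball_subset_closedBall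

theorem setIntegral_unitBall_pow_mul_conj_pow_of_ne {i k : ℕ} (hik : i ≠ k) :
    ∫ w in ball (0 : ℂ) 1, w ^ i * conj w ^ k = 0 := by
  -- the rotation by the angle `π / (i - k)` preserves the disc and negates the integrand
  set a : Circle := Circle.exp (Real.pi / ((i : ℝ) - k))
  have hsub : ((i : ℂ) - k) ≠ 0 := sub_ne_zero.mpr (by exact_mod_cast hik)
  have ha : (a : ℂ) ^ i * conj (a : ℂ) ^ k = -1 := by
    rw [Circle.coe_exp, ← Complex.exp_conj, ← Complex.exp_nat_mul, ← Complex.exp_nat_mul,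
      ← Complex.exp_add, ← Complex.exp_pi_mul_I]
    congr 1
    simp only [map_mul, conj_ofReal, conj_I]
    push_cast
    field_simp
    ring
  have hrot := (rotation a).measurePreserving.setIntegral_preimage_emb
    (rotation a).toHomeomorph.measurableEmbedding (fun w => w ^ i * conj w ^ k) (ball 0 1)
  have hf : ∀ w : ℂ, rotation a w ^ i * conj (rotation a w) ^ k = -(w ^ i * conj w ^ k) := by
    intro w
    rw [rotation_apply, map_mul, mul_pow, mul_pow, ← neg_one_mul, ← ha]
    ring
  simp only [LinearIsometryEquiv.preimage_ball, map_zero, hf, integral_neg] at hrot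
  exact self_eq_neg.mp hrot.symm

theorem setIntegral_unitBall_norm_pow (p : ℕ) :
    ∫ w in ball (0 : ℂ) 1, ‖w‖ ^ p = 2 * Real.pi / (p + 2) := by
  rw [setIntegral_ball_norm_pow, finrank_real_complex, measureReal_def, Complex.volume_ball]
  simp
  ring

theorem setIntegral_unitBall_pow_mul_conj_pow (i k : ℕ) :
    ∫ w in ball (0 : ℂ) 1, w ^ i * conj w ^ k = if i = k then (Real.pi / (i + 1) : ℂ) else 0 := by
  split_ifs with hik
  · subst hik
    simp_rw [← mul_pow, mul_conj', ← pow_mul, ← ofReal_pow]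
    rw [integral_complex_ofReal, setIntegral_unitBall_norm_pow]
    push_cast
    field_simp
  · exact setIntegral_unitBall_pow_mul_conj_pow_of_ne hik

theorem setIntegral_unitBall_sum_mul_conj_sum (a b : ℕ → ℂ) (N : ℕ) :
    ∫ w in ball (0 : ℂ) 1, (∑ i ∈ range N, a i * w ^ i) * conj (∑ k ∈ range N, b k * w ^ k)
      = Real.pi * ∑ i ∈ range N, a i * conj (b i) / (i + 1) := by
  have hexpand : ∀ w : ℂ, (∑ i ∈ range N, a i * w ^ i) * conj (∑ k ∈ range N, b k * w ^ k)
      = ∑ i ∈ range N, ∑ k ∈ range N, a i * conj (b k) * (w ^ i * conj w ^ k) := fun w => by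
    simp only [map_sum, map_mul, map_pow, sum_mul_sum]
    exact sum_congr rfl fun i _ => sum_congr rfl fun k _ => by ring
  have hterm : ∀ i k, IntegrableOn (fun w : ℂ => a i * conj (b k) * (w ^ i * conj w ^ k))
      (ball 0 1) := fun i k => integrableOn_unitBall_of_continuous
        (continuous_const.mul ((continuous_pow i).mul (continuous_conj.pow k)))
  simp_rw [hexpand]
  rw [integral_finsetSum _ fun i _ => integrable_finsetSum _ fun k _ => hterm i k, mul_sum]
  refine sum_congr rfl fun i hi => ?_
  simp_rw [integral_finsetSum _ fun k _ => hterm i k, integral_const_mul,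
    setIntegral_unitBall_pow_mul_conj_pow, mul_ite, mul_zero]
  rw [sum_ite_eq, if_pos hi]
  ring

theorem setIntegral_unitBall_norm_add_pow (z : ℂ) (m : ℕ) :
    ∫ w in ball (0 : ℂ) 1, ‖w + z‖ ^ (2 * m)
      = Real.pi * ∑ k ∈ range (m + 1), (m.choose k : ℝ) ^ 2 / (k + 1) * ‖z‖ ^ (2 * (m - k)) := by
  have hbinom : ∀ w : ℂ, (w + z) ^ m = ∑ k ∈ range (m + 1), (z ^ (m - k) * m.choose k) * w ^ k :=
    fun w => by rw [add_pow]; exact sum_congr rfl fun k _ => by ring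
  have hnorm : ∀ w : ℂ, ((‖w + z‖ ^ (2 * m) : ℝ) : ℂ) = (w + z) ^ m * conj ((w + z) ^ m) := by
    intro w
    rw [mul_conj', norm_pow]
    push_cast
    ring
  apply ofReal_injective
  rw [← integral_complex_ofReal]
  simp_rw [hnorm, hbinom]
  rw [setIntegral_unitBall_sum_mul_conj_sum]
  push_cast
  rw [mul_sum, mul_sum]
  refine sum_congr rfl fun k _ => ?_
  rw [mul_conj', norm_mul, norm_pow, norm_natCast]
  push_cast
  ring

theorem setIntegral_unitBall_discMeasure_eq (f : ℂ → ℝ) :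
    ∫ w in ball (0 : ℂ) 1, f w ∂discMeasure = Real.pi⁻¹ * ∫ w in ball (0 : ℂ) 1, f w := by
  rw [discMeasure, Measure.restrict_smul, integral_smul_measure, ENNReal.toReal_inv,
    ENNReal.toReal_ofReal Real.pi_pos.le, smul_eq_mul]

theorem integrableOn_unitBall_discMeasure_of_continuous {f : ℂ → ℝ} (hf : Continuous f) :
    IntegrableOn f (ball (0 : ℂ) 1) discMeasure := by
  rw [discMeasure, IntegrableOn, Measure.restrict_smul]
  exact (integrableOn_unitBall_of_continuous hf).smul_measure
    (ENNReal.inv_ne_top.mpr (ENNReal.ofReal_pos.mpr Real.pi_pos).ne')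

theorem setIntegral_discMeasure_norm_pow (p : ℕ) :
    ∫ w in ball (0 : ℂ) 1, ‖w‖ ^ p ∂discMeasure = 2 / (p + 2) := by
  rw [setIntegral_unitBall_discMeasure_eq, setIntegral_unitBall_norm_pow]
  field_simp

theorem setIntegral_discMeasure_norm_add_pow (z : ℂ) (m : ℕ) :
    ∫ w in ball (0 : ℂ) 1, ‖w + z‖ ^ (2 * m) ∂discMeasure
      = ∑ k ∈ range (m + 1), (m.choose k : ℝ) ^ 2 / (k + 1) * ‖z‖ ^ (2 * (m - k)) := by
  rw [setIntegral_unitBall_discMeasure_eq, setIntegral_unitBall_norm_add_pow]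
  field_simp

theorem setIntegral_discMeasure_norm_pow_mul_sq_one_sub_sq (s : ℕ) :
    ∫ w in ball (0 : ℂ) 1, ‖w‖ ^ (2 * s) * (3 * (1 - ‖w‖ ^ 2) ^ 2) ∂discMeasure
      = 6 / (((s : ℝ) + 1) * (s + 2) * (s + 3)) := by
  have hexpand : ∀ w : ℂ, ‖w‖ ^ (2 * s) * (3 * (1 - ‖w‖ ^ 2) ^ 2)
      = 3 * ‖w‖ ^ (2 * s) - 6 * ‖w‖ ^ (2 * s + 2) + 3 * ‖w‖ ^ (2 * s + 4) := fun w => by ring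
  have hint : ∀ c : ℝ, ∀ p : ℕ, IntegrableOn (fun w : ℂ => c * ‖w‖ ^ p) (ball 0 1) discMeasure :=
    fun c p => integrableOn_unitBall_discMeasure_of_continuous (by fun_prop)
  simp_rw [hexpand]
  rw [integral_add (f := fun w => 3 * ‖w‖ ^ (2 * s) - 6 * ‖w‖ ^ (2 * s + 2))
    ((hint 3 _).sub (hint 6 _)) (hint 3 _), integral_sub (hint 3 _) (hint 6 _)]
  simp_rw [integral_const_mul, setIntegral_discMeasure_norm_pow]
  push_cast
  field_simp
  ring

theorem setIntegral_discMeasure_norm_add_add_pow_mul {φ : ℂ → ℝ} (hφ : Continuous φ) (m : ℕ) :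
    ∫ w₃ in ball (0 : ℂ) 1, (∫ w₂ in ball (0 : ℂ) 1, (∫ w₁ in ball (0 : ℂ) 1,
        ‖w₁ + w₂ + w₃‖ ^ (2 * m) * φ w₃ ∂discMeasure) ∂discMeasure) ∂discMeasure
      = ∑ k ∈ range (m + 1), ∑ j ∈ range (m - k + 1),
          (m.choose k : ℝ) ^ 2 / (k + 1) * ((m - k).choose j ^ 2 / (j + 1))
            * ∫ w in ball (0 : ℂ) 1, ‖w‖ ^ (2 * (m - k - j)) * φ w ∂discMeasure := by
  have hint : ∀ (c : ℝ) (g : ℂ → ℝ), Continuous g →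
      IntegrableOn (fun w => c * g w) (ball 0 1) discMeasure :=
    fun c g hg => integrableOn_unitBall_discMeasure_of_continuous (continuous_const.mul hg)
  have hinner : ∀ w₂ w₃ : ℂ, ∫ w₁ in ball (0 : ℂ) 1, ‖w₁ + w₂ + w₃‖ ^ (2 * m) * φ w₃ ∂discMeasure
      = φ w₃ * ∑ k ∈ range (m + 1), (m.choose k : ℝ) ^ 2 / (k + 1) * ‖w₂ + w₃‖ ^ (2 * (m - k)) := by
    intro w₂ w₃
    simp_rw [add_assoc]
    rw [integral_mul_const, setIntegral_discMeasure_norm_add_pow, mul_comm]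
  have hmiddle : ∀ w₃ : ℂ, ∫ w₂ in ball (0 : ℂ) 1, φ w₃ * ∑ k ∈ range (m + 1),
        (m.choose k : ℝ) ^ 2 / (k + 1) * ‖w₂ + w₃‖ ^ (2 * (m - k)) ∂discMeasure
      = ∑ k ∈ range (m + 1), ∑ j ∈ range (m - k + 1),
          (m.choose k : ℝ) ^ 2 / (k + 1) * ((m - k).choose j ^ 2 / (j + 1))
            * (‖w₃‖ ^ (2 * (m - k - j)) * φ w₃) := by
    intro w₃
    rw [integral_const_mul, integral_finsetSum _ fun k _ => hint _ _ (by fun_prop), mul_sum]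
    refine sum_congr rfl fun k _ => ?_
    rw [integral_const_mul, setIntegral_discMeasure_norm_add_pow, mul_sum, mul_sum]
    exact sum_congr rfl fun j _ => by ring
  simp_rw [hinner, hmiddle]
  rw [integral_finsetSum _ fun k _ => integrable_finsetSum _ fun j _ => hint _ _ (by fun_prop)]
  refine sum_congr rfl fun k _ => ?_
  rw [integral_finsetSum _ fun j _ => hint _ _ (by fun_prop)]
  exact sum_congr rfl fun j _ => integral_const_mul _ _

open Nat in
theorem cast_multinomial_fin_three {K : Type*} [Field K] [CharZero K] (a b c : ℕ) :
    (Nat.multinomial univ ![a, b, c] : K) = (a + b + c)! / (a ! * b ! * c !) := by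
  have h := Nat.multinomial_spec univ ![a, b, c]
  simp only [Fin.prod_univ_three, Fin.sum_univ_three, Matrix.cons_val] at h
  rw [eq_div_iff (by simp [Nat.factorial_ne_zero]), ← h]
  push_cast
  ring

theorem multinomial_fin_three (a b c : ℕ) :
    Nat.multinomial univ ![a, b, c] = (a + b + c).choose a * (b + c).choose b := by
  apply Nat.cast_injective (R := ℚ)
  push_cast
  rw [cast_multinomial_fin_three, Nat.cast_choose ℚ (by omega : a ≤ a + b + c),
    Nat.cast_choose ℚ (by omega : b ≤ b + c), show a + b + c - a = b + c by omega,
    Nat.add_sub_cancel_left]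
  field_simp

theorem cast_multinomial_fin_three_succ_succ {K : Type*} [Field K] [CharZero K] (a b c : ℕ) :
    (Nat.multinomial univ ![a + 1, b + 1, c] : K) * ((a + 1) * (b + 1))
      = (a + b + c + 2) * (a + b + c + 1) * Nat.multinomial univ ![a, b, c] := by
  rw [cast_multinomial_fin_three, cast_multinomial_fin_three,
    show a + 1 + (b + 1) + c = a + b + c + 1 + 1 by omega]
  push_cast [Nat.factorial_succ]
  field_simp
  ring

theorem mem_multiIndices3 {N : ℕ} {β : Fin 3 → ℕ} :
    β ∈ multiIndices3 N ↔ β 0 + β 1 + β 2 = N := by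
  simp only [multiIndices3, mem_filter, Fintype.mem_piFinset, mem_range, Fin.sum_univ_three,
    and_iff_right_iff_imp]
  intro h i
  fin_cases i <;> simp <;> omega

theorem sum_multiIndices3 {M : Type*} [AddCommMonoid M] (N : ℕ) (f : (Fin 3 → ℕ) → M) :
    ∑ β ∈ multiIndices3 N, f β
      = ∑ k ∈ range (N + 1), ∑ j ∈ range (N - k + 1), f ![k, j, N - k - j] := by
  have hinv : ∀ β ∈ multiIndices3 N, ![β 0, β 1, N - β 0 - β 1] = β := fun β hβ => by
    have := mem_multiIndices3.mp hβ
    ext i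
    fin_cases i <;> simp
    omega
  rw [sum_sigma']
  refine sum_nbij' (fun β => ⟨β 0, β 1⟩) (fun p => ![p.1, p.2, N - p.1 - p.2]) ?_ ?_ hinv
    (fun _ _ => rfl) (fun β hβ => by rw [hinv β hβ])
  · intro β hβ
    simp only [mem_sigma, mem_range]
    have := mem_multiIndices3.mp hβ
    omega
  · intro p hp
    simp only [mem_sigma, mem_range] at hp
    simp only [mem_multiIndices3, Matrix.cons_val]
    omega

theorem sum_multiIndices3_add_two {M : Type*} [AddCommMonoid M] (m : ℕ) (f : (Fin 3 → ℕ) → M)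
    (hf : ∀ β, β 0 = 0 ∨ β 1 = 0 → f β = 0) :
    ∑ β ∈ multiIndices3 (m + 2), f β = ∑ β ∈ multiIndices3 m, f ![β 0 + 1, β 1 + 1, β 2] := by
  symm
  refine sum_bij_ne_zero (fun β _ _ => ![β 0 + 1, β 1 + 1, β 2]) ?_ ?_ ?_ (fun _ _ _ => rfl)
  · intro β hβ _
    simp only [mem_multiIndices3, Matrix.cons_val] at hβ ⊢
    omega
  · intro β _ _ γ _ _ h
    have h0 := congrFun h 0
    have h1 := congrFun h 1
    have h2 := congrFun h 2
    simp only [Matrix.cons_val] at h0 h1 h2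
    ext i
    fin_cases i <;> simp <;> omega
  · intro γ hγ hfγ
    have hpos : γ 0 ≠ 0 ∧ γ 1 ≠ 0 := by
      by_contra h
      exact hfγ (hf γ (by tauto))
    have hγ' : ![γ 0 - 1 + 1, γ 1 - 1 + 1, γ 2] = γ := by
      ext i
      fin_cases i <;> simp <;> omega
    refine ⟨![γ 0 - 1, γ 1 - 1, γ 2], ?_, by simpa [hγ'] using hfγ, by simpa using hγ'⟩
    simp only [mem_multiIndices3, Matrix.cons_val] at hγ ⊢
    omega

theorem sum_multiIndices3_add_two_eq (m : ℕ) :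
    ∑ β ∈ multiIndices3 (m + 2),
        (Nat.multinomial univ β : ℝ) ^ 2 * (β 0 : ℝ) * (β 1 : ℝ)
          / (((β 2 : ℝ) + 1) * ((β 2 : ℝ) + 2) * ((β 2 : ℝ) + 3))
      = ((m : ℝ) + 2) ^ 2 * ((m : ℝ) + 1) ^ 2 / 6 * ∑ β ∈ multiIndices3 m,
          (Nat.multinomial univ β : ℝ) ^ 2 / ((β 0 + 1) * (β 1 + 1))
            * (6 / (((β 2 : ℝ) + 1) * (β 2 + 2) * (β 2 + 3))) := by
  rw [sum_multiIndices3_add_two m _ (by rintro β (h | h) <;> simp [h]), mul_sum]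
  refine sum_congr rfl fun β hβ => ?_
  have hm : (β 0 : ℝ) + β 1 + β 2 = m := by exact_mod_cast mem_multiIndices3.mp hβ
  have key := cast_multinomial_fin_three_succ_succ (K := ℝ) (β 0) (β 1) (β 2)
  rw [hm] at key
  have hβ' : ![β 0, β 1, β 2] = β := by ext i; fin_cases i <;> rfl
  rw [hβ'] at key
  simp only [Matrix.cons_val]
  rw [eq_div_of_mul_eq (by positivity) key]
  push_cast
  field_simp

theorem setIntegral_discMeasure_iterated_eq_sum_multiIndices3 (m : ℕ) :
    ∫ w₃ in ball (0 : ℂ) 1, (∫ w₂ in ball (0 : ℂ) 1, (∫ w₁ in ball (0 : ℂ) 1,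
        ‖w₁ + w₂ + w₃‖ ^ (2 * m) * (3 * (1 - ‖w₃‖ ^ 2) ^ 2) ∂discMeasure) ∂discMeasure) ∂discMeasure
      = ∑ β ∈ multiIndices3 m,
          (Nat.multinomial univ β : ℝ) ^ 2 / ((β 0 + 1) * (β 1 + 1))
            * (6 / (((β 2 : ℝ) + 1) * (β 2 + 2) * (β 2 + 3))) := by
  rw [setIntegral_discMeasure_norm_add_add_pow_mul (by fun_prop), sum_multiIndices3]
  refine sum_congr rfl fun k hk => sum_congr rfl fun j hj => ?_
  rw [mem_range] at hk hj
  simp only [Matrix.cons_val, setIntegral_discMeasure_norm_pow_mul_sq_one_sub_sq,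
    multinomial_fin_three, show k + j + (m - k - j) = m by omega, show j + (m - k - j) = m - k by omega]
  push_cast
  field_simp

theorem stmt_12 (n : ℕ) (hn : 2 ≤ n) :
    ((n : ℝ) + 1) * ∑ β ∈ multiIndices3 n,
        (Nat.multinomial Finset.univ β : ℝ) ^ 2 * (β 0 : ℝ) * (β 1 : ℝ)
          / (((β 2 : ℝ) + 1) * ((β 2 : ℝ) + 2) * ((β 2 : ℝ) + 3))
      = ((n : ℝ) + 1) * (n : ℝ) ^ 2 * ((n : ℝ) - 1) ^ 2 / 6
          * ∫ w₃ in Metric.ball (0:ℂ) 1, (∫ w₂ in Metric.ball (0:ℂ) 1,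
              (∫ w₁ in Metric.ball (0:ℂ) 1,
                ‖w₁ + w₂ + w₃‖ ^ (2 * (n - 2)) * (3 * (1 - ‖w₃‖ ^ 2) ^ 2)
                ∂discMeasure) ∂discMeasure) ∂discMeasure := by
  obtain ⟨m, rfl⟩ : ∃ m, n = m + 2 := ⟨n - 2, by omega⟩
  rw [Nat.add_sub_cancel, sum_multiIndices3_add_two_eq,
    setIntegral_discMeasure_iterated_eq_sum_multiIndices3]
  push_cast
  ring
end

section
/- There exists ε₀ > 0 such that for all 0 < ε < ε₀, sup over (z₁,z₂,z₃) ∈ T³ of |z₁³ + z₂³ + z₁z₂z₃ − ε·z₃³| < 3. -/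
/-!
Dividing by the unimodular number `z₁ z₂ z₃` turns the polynomial into `u + v + 1 - ε (u v)⁻¹`
with `u = z₁² / (z₂ z₃)`, `v = z₂² / (z₁ z₃)` on the unit circle. Since `‖1 - x‖² = 2 - 2 Re x`
for `‖x‖ = 1`, the defect `(3 - ε)² - ‖u + v + 1 - ε (u v)⁻¹‖²` equals
`‖1 - u‖² + ‖1 - v‖² + ‖u - v‖² - ε (‖1 - u² v‖² + ‖1 - u v²‖² + ‖1 - u v‖²)`,
and the triangle inequality bounds the subtracted sum by `11 (‖1 - u‖² + ‖1 - v‖²)`.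
Hence the supremum is at most `3 - ε` for `0 < ε ≤ 1 / 11`.
-/

theorem norm_one_sub_mul_le {R : Type*} [SeminormedRing R] {u : R} (hu : ‖u‖ ≤ 1) (v : R) :
    ‖1 - u * v‖ ≤ ‖1 - u‖ + ‖1 - v‖ :=
  calc ‖1 - u * v‖ = ‖(1 - u) + u * (1 - v)‖ := by noncomm_ring
    _ ≤ ‖1 - u‖ + ‖u‖ * ‖1 - v‖ := (norm_add_le _ _).trans (by gcongr; exact norm_mul_le _ _)
    _ ≤ ‖1 - u‖ + ‖1 - v‖ := by gcongr; exact mul_le_of_le_one_left (norm_nonneg _) hu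

theorem three_sub_sq_sub_sq_norm {u v : ℂ} (hu : ‖u‖ = 1) (hv : ‖v‖ = 1) (ε : ℝ) :
    (3 - ε) ^ 2 - ‖u + v + 1 - ε * (u * v)⁻¹‖ ^ 2
      = ‖1 - u‖ ^ 2 + ‖1 - v‖ ^ 2 + ‖u - v‖ ^ 2
        - ε * (‖1 - u ^ 2 * v‖ ^ 2 + ‖1 - u * v ^ 2‖ ^ 2 + ‖1 - u * v‖ ^ 2) := by
  have hu₀ : u ≠ 0 := by rintro rfl; simp at hu
  have hv₀ : v ≠ 0 := by rintro rfl; simp at hv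
  apply Complex.ofReal_injective
  simp only [Complex.ofReal_sub, Complex.ofReal_add, Complex.ofReal_mul, Complex.ofReal_pow,
    ← Complex.mul_conj', map_sub, map_add, map_mul, map_pow, map_one, map_inv₀,
    Complex.conj_ofReal, ← Complex.inv_eq_conj hu, ← Complex.inv_eq_conj hv]
  push_cast
  field_simp
  ring

theorem norm_add_add_one_sub_mul_inv_le {u v : ℂ} (hu : ‖u‖ = 1) (hv : ‖v‖ = 1) {ε : ℝ}
    (hε₀ : 0 ≤ ε) (hε : ε ≤ 1 / 11) :
    ‖u + v + 1 - ε * (u * v)⁻¹‖ ≤ 3 - ε := by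
  set x := ‖1 - u‖
  set y := ‖1 - v‖
  have huv : ‖1 - u * v‖ ≤ x + y := norm_one_sub_mul_le hu.le v
  have huuv : ‖1 - u ^ 2 * v‖ ≤ 2 * x + y := by
    rw [sq, mul_assoc]; linarith [norm_one_sub_mul_le hu.le (u * v)]
  have huvv : ‖1 - u * v ^ 2‖ ≤ x + 2 * y := by
    rw [sq, ← mul_assoc, mul_comm]; linarith [norm_one_sub_mul_le hv.le (u * v)]
  have hsum : ‖1 - u ^ 2 * v‖ ^ 2 + ‖1 - u * v ^ 2‖ ^ 2 + ‖1 - u * v‖ ^ 2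
      ≤ 11 * (x ^ 2 + y ^ 2) := by
    have h₁ := pow_le_pow_left₀ (norm_nonneg _) huuv 2
    have h₂ := pow_le_pow_left₀ (norm_nonneg _) huvv 2
    have h₃ := pow_le_pow_left₀ (norm_nonneg _) huv 2
    nlinarith [sq_nonneg (x - y)]
  have hsq : ‖u + v + 1 - ε * (u * v)⁻¹‖ ^ 2 ≤ (3 - ε) ^ 2 := by
    have := three_sub_sq_sub_sq_norm hu hv ε
    nlinarith [mul_le_mul_of_nonneg_left hsum hε₀, sq_nonneg ‖u - v‖, sq_nonneg x, sq_nonneg y]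
  exact le_of_pow_le_pow_left₀ two_ne_zero (by linarith) hsq

theorem norm_cubic_eq {z₁ z₂ z₃ : ℂ} (h₁ : ‖z₁‖ = 1) (h₂ : ‖z₂‖ = 1) (h₃ : ‖z₃‖ = 1) (ε : ℂ) :
    ‖z₁ ^ 3 + z₂ ^ 3 + z₁ * z₂ * z₃ - ε * z₃ ^ 3‖
      = ‖z₁ ^ 2 / (z₂ * z₃) + z₂ ^ 2 / (z₁ * z₃) + 1
          - ε * (z₁ ^ 2 / (z₂ * z₃) * (z₂ ^ 2 / (z₁ * z₃)))⁻¹‖ := by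
  have hz₁ : z₁ ≠ 0 := by rintro rfl; simp at h₁
  have hz₂ : z₂ ≠ 0 := by rintro rfl; simp at h₂
  have hz₃ : z₃ ≠ 0 := by rintro rfl; simp at h₃
  have hw : ‖z₁ * z₂ * z₃‖ = 1 := by simp [h₁, h₂, h₃]
  rw [← div_one ‖_‖, ← hw, ← norm_div]
  congr 1
  field_simp

theorem stmt_13 :
    ∃ ε₀ : ℝ, 0 < ε₀ ∧ ∀ ε : ℝ, 0 < ε → ε < ε₀ →
      sSup {t : ℝ | ∃ z₁ z₂ z₃ : ℂ, ‖z₁‖ = 1 ∧ ‖z₂‖ = 1 ∧ ‖z₃‖ = 1 ∧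
          t = ‖z₁ ^ 3 + z₂ ^ 3 + z₁ * z₂ * z₃ - (ε : ℂ) * z₃ ^ 3‖} < 3 := by
  refine ⟨1 / 11, by norm_num, fun ε hε₀ hε => ?_⟩
  refine (Real.sSup_le ?_ (by linarith)).trans_lt (by linarith : 3 - ε < 3)
  rintro t ⟨z₁, z₂, z₃, h₁, h₂, h₃, rfl⟩
  rw [norm_cubic_eq h₁ h₂ h₃]
  exact norm_add_add_one_sub_mul_inv_le (by simp [h₁, h₂, h₃]) (by simp [h₁, h₂, h₃]) hε₀.le hε.le
end
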